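/- arXiv:1701.04464 — 5 statements merged into one kernel-verified Lean document; each statement's English description precedes it below -/
import Mathlib

section
/- For any a ∈ ℝⁿ and μ > 0, the function φ_μ(x) = (1/(2μ))‖x−a‖² − (μ/2)·d((x−a)/μ; B)², where B is the closed unit ball and d is the Euclidean distance function to B, satisfies φ_μ(x) ≤ ‖x−a‖ ≤ φ_μ(x) + μ/2 for all x ∈ ℝⁿ. -/
open Metric

lemma infDist_closedBall_unit {E : Type*} [NormedAddCommGroup E] [NormedSpace ℝ E]
    (y : E) : infDist y (closedBall (0 : E) 1) = max (‖y‖ - 1) 0 := by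
  rcases le_or_gt ‖y‖ 1 with h | h
  · rw [infDist_zero_of_mem (by simpa [mem_closedBall, dist_zero_right] using h)]
    rw [max_eq_right (by linarith)]
  · rw [max_eq_left (by linarith)]
    have hy : ‖y‖ ≠ 0 := by positivity
    apply le_antisymm
    · have hb : (‖y‖⁻¹ • y) ∈ closedBall (0 : E) 1 := by
        simp [mem_closedBall, dist_zero_right, norm_smul,
          abs_of_nonneg (inv_nonneg.2 (norm_nonneg y)), inv_mul_cancel₀ hy]
      calc infDist y (closedBall (0 : E) 1) ≤ dist y (‖y‖⁻¹ • y) := infDist_le_dist_of_mem hb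
        _ = ‖y‖ - 1 := by
            rw [dist_eq_norm]
            have : y - ‖y‖⁻¹ • y = (1 - ‖y‖⁻¹) • y := by
              rw [sub_smul, one_smul]
            rw [this, norm_smul, Real.norm_eq_abs,
              abs_of_nonneg (by rw [sub_nonneg]; exact inv_le_one_of_one_le₀ h.le),
              sub_mul, one_mul, inv_mul_cancel₀ hy]
    · rw [infDist_eq_iInf]
      haveI : Nonempty (closedBall (0 : E) 1) := ⟨⟨0, by simp⟩⟩
      apply le_ciInf
      intro b
      have hb : ‖(b : E)‖ ≤ 1 := by
        have := b.2; rwa [mem_closedBall, dist_zero_right] at this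
      have := norm_sub_norm_le y (b : E)
      rw [dist_eq_norm]
      linarith

/-- Nesterov smoothing bounds: for `a ∈ ℝⁿ`, `μ > 0`, the function
`φ_μ(x) = (1/(2μ))‖x−a‖² − (μ/2) d((x−a)/μ; B)²` satisfies
`φ_μ(x) ≤ ‖x−a‖ ≤ φ_μ(x) + μ/2`. -/
theorem nesterov_smoothing_bounds (n : ℕ) (a : EuclideanSpace ℝ (Fin n)) (μ : ℝ) (hμ : 0 < μ)
    (x : EuclideanSpace ℝ (Fin n)) :
    (1 / (2 * μ)) * ‖x - a‖ ^ 2 -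
        (μ / 2) * (infDist (μ⁻¹ • (x - a)) (closedBall (0 : EuclideanSpace ℝ (Fin n)) 1)) ^ 2
      ≤ ‖x - a‖ ∧
    ‖x - a‖ ≤ (1 / (2 * μ)) * ‖x - a‖ ^ 2 -
        (μ / 2) * (infDist (μ⁻¹ • (x - a)) (closedBall (0 : EuclideanSpace ℝ (Fin n)) 1)) ^ 2
      + μ / 2 := by
  set r := ‖x - a‖ with hr
  have hr0 : 0 ≤ r := norm_nonneg _
  have hnorm : ‖μ⁻¹ • (x - a)‖ = r / μ := by
    rw [norm_smul, Real.norm_eq_abs, abs_of_pos (inv_pos.2 hμ), div_eq_inv_mul]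
  rw [infDist_closedBall_unit, hnorm]
  rcases le_or_gt r μ with h | h
  · rw [max_eq_right (by rw [sub_nonpos]; exact div_le_one_of_le₀ h hμ.le)]
    constructor
    · rw [sub_le_iff_le_add]
      have : (1 / (2 * μ)) * r ^ 2 ≤ r := by
        rw [div_mul_eq_mul_div, one_mul, div_le_iff₀ (by linarith)]
        nlinarith
      simpa using this
    · have key : 0 ≤ (r - μ)^2 := sq_nonneg _
      have h2 : (1 / (2 * μ)) * r ^ 2 - μ / 2 * 0 ^ 2 + μ / 2 - r = (r - μ)^2 / (2 * μ) := by
        field_simp; ring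
      nlinarith [div_nonneg key (by linarith : (0:ℝ) ≤ 2 * μ)]
  · rw [max_eq_left (by rw [sub_nonneg]; exact (one_le_div hμ).2 h.le)]
    have key : (1 / (2 * μ)) * r ^ 2 - (μ / 2) * (r / μ - 1) ^ 2 = r - μ / 2 := by
      field_simp
      ring
    rw [key]
    constructor <;> linarith
end

section
/- If g, h: ℝⁿ → ℝ are convex functions, g is γ₁-convex and h is γ₂-convex, and sequences (x_k), (y_k) satisfy y_{k+1} ∈ ∂h(x_k) and x_{k+1} ∈ ∂g*(y_{k+1}) (i.e., y_{k+1} ∈ ∂g(x_{k+1})), then for f = g − h one has f(x_k) − f(x_{k+1}) ≥ ((γ₁+γ₂)/2)‖x_{k+1} − x_k‖² for all k. -/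
open scoped RealInnerProductSpace

/-- The convex subdifferential. -/
def Subdiff {n : ℕ} (g : EuclideanSpace ℝ (Fin n) → ℝ) (x : EuclideanSpace ℝ (Fin n)) :
    Set (EuclideanSpace ℝ (Fin n)) :=
  {v | ∀ z, g x + ⟪v, z - x⟫ ≤ g z}

/-- `h` is `γ`-convex if `h − (γ/2)‖·‖²` is convex. -/
def GammaConvex {n : ℕ} (h : EuclideanSpace ℝ (Fin n) → ℝ) (γ : ℝ) : Prop :=
  ConvexOn ℝ Set.univ (fun x => h x - γ / 2 * ‖x‖ ^ 2)

lemma key {n : ℕ} (φ : EuclideanSpace ℝ (Fin n) → ℝ) (γ : ℝ) (hγ : 0 ≤ γ)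
    (hφ : GammaConvex φ γ) {x v : EuclideanSpace ℝ (Fin n)} (hv : v ∈ Subdiff φ x)
    (z : EuclideanSpace ℝ (Fin n)) :
    φ x + ⟪v, z - x⟫ + γ / 2 * ‖z - x‖ ^ 2 ≤ φ z := by
  have step : ∀ t : ℝ, 0 < t → t < 1 →
      φ x + ⟪v, z - x⟫ + γ / 2 * (1 - t) * ‖z - x‖ ^ 2 ≤ φ z := by
    intro t ht ht1
    have hc := hφ.2 (Set.mem_univ x) (Set.mem_univ z) (by linarith : (0:ℝ) ≤ 1 - t)
      (le_of_lt ht) (by ring)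
    simp only [smul_eq_mul] at hc
    set w : EuclideanSpace ℝ (Fin n) := (1 - t) • x + t • z with hw
    have hsub := hv w
    have hwx : w - x = t • (z - x) := by
      rw [hw]; module
    have hiw : ⟪v, w - x⟫ = t * ⟪v, z - x⟫ := by
      rw [hwx, real_inner_smul_right]
    have hnorm : ‖w‖ ^ 2 = (1 - t) * ‖x‖ ^ 2 + t * ‖z‖ ^ 2 - t * (1 - t) * ‖z - x‖ ^ 2 := by
      have e1 : ‖w‖ ^ 2 = (1-t)^2 * ‖x‖^2 + 2 * ((1-t)*t) * ⟪x, z⟫ + t^2 * ‖z‖^2 := by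
        rw [hw, @norm_add_sq_real, norm_smul, norm_smul, real_inner_smul_left,
          real_inner_smul_right]
        rw [Real.norm_eq_abs, Real.norm_eq_abs, abs_of_pos ht,
          abs_of_pos (by linarith : (0:ℝ) < 1 - t)]
        ring
      have e2 : ‖z - x‖ ^ 2 = ‖z‖^2 - 2 * ⟪x, z⟫ + ‖x‖^2 := by
        rw [@norm_sub_sq_real, real_inner_comm]
        try ring
      rw [e1, e2]; ring
    rw [hiw] at hsub
    nlinarith [hsub, hc, hnorm]
  have hd : 0 ≤ ‖z - x‖ ^ 2 := by positivity
  by_contra hcon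
  push_neg at hcon
  have hεpos : 0 < φ x + ⟪v, z - x⟫ + γ / 2 * ‖z - x‖ ^ 2 - φ z := by linarith
  have hdpos : 0 < γ / 2 * ‖z - x‖ ^ 2 + 1 := by positivity
  obtain ⟨ε, hε, hεp⟩ : ∃ ε : ℝ, ε = φ x + ⟪v, z - x⟫ + γ / 2 * ‖z - x‖ ^ 2 - φ z ∧ 0 < ε :=
    ⟨_, rfl, hεpos⟩
  have ht0 : 0 < min (1/2) (ε / (γ / 2 * ‖z - x‖ ^ 2 + 1)) :=
    lt_min (by norm_num) (by positivity)
  have ht1 : min (1/2) (ε / (γ / 2 * ‖z - x‖ ^ 2 + 1)) < 1 :=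
    lt_of_le_of_lt (min_le_left _ _) (by norm_num)
  have hst := step _ ht0 ht1
  have ht2 : min (1/2) (ε / (γ / 2 * ‖z - x‖ ^ 2 + 1)) ≤ ε / (γ / 2 * ‖z - x‖ ^ 2 + 1) :=
    min_le_right _ _
  have hkey : min (1/2) (ε / (γ / 2 * ‖z - x‖ ^ 2 + 1)) * (γ / 2 * ‖z - x‖ ^ 2 + 1) ≤ ε := by
    exact (le_div_iff₀ hdpos).mp ht2
  nlinarith [hst, hkey, ht0, hε]

/-- DCA descent estimate: if `g` is `γ₁`-convex, `h` is `γ₂`-convex, and the DCA iterates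
satisfy `y_{k+1} ∈ ∂h(x_k)` and `y_{k+1} ∈ ∂g(x_{k+1})`, then for `f = g − h`,
`f(x_k) − f(x_{k+1}) ≥ ((γ₁+γ₂)/2) ‖x_{k+1} − x_k‖²`. -/
theorem dca_descent (n : ℕ) (g h : EuclideanSpace ℝ (Fin n) → ℝ)
    (γ₁ γ₂ : ℝ) (hγ₁ : 0 ≤ γ₁) (hγ₂ : 0 ≤ γ₂)
    (hg : ConvexOn ℝ Set.univ g) (hh : ConvexOn ℝ Set.univ h)
    (hg' : GammaConvex g γ₁) (hh' : GammaConvex h γ₂)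
    (x y : ℕ → EuclideanSpace ℝ (Fin n))
    (hy : ∀ k, y (k + 1) ∈ Subdiff h (x k))
    (hx : ∀ k, y (k + 1) ∈ Subdiff g (x (k + 1))) :
    ∀ k, (g (x k) - h (x k)) - (g (x (k + 1)) - h (x (k + 1)))
      ≥ (γ₁ + γ₂) / 2 * ‖x (k + 1) - x k‖ ^ 2 := by
  intro k
  have h1 := key h γ₂ hγ₂ hh' (hy k) (x (k + 1))
  have h2 := key g γ₁ hγ₁ hg' (hx k) (x k)
  have hn : ‖x k - x (k + 1)‖ = ‖x (k + 1) - x k‖ := norm_sub_rev _ _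
  have hi : ⟪y (k + 1), x k - x (k + 1)⟫ = -⟪y (k + 1), x (k + 1) - x k⟫ := by
    rw [← inner_neg_right]; congr 1; abel
  rw [hn, hi] at h2
  linarith
end

section
/- Under the DCA iteration y_{k+1} ∈ ∂h(x_k), x_{k+1} ∈ ∂g(x_{k+1})⁻¹(y_{k+1}) with g γ₁-convex, h γ₂-convex, γ₁ + γ₂ > 0, if f = g − h is bounded below and the sequence (x_k) is bounded, then every subsequential limit x̄ of (x_k) is a critical point of f, i.e., ∂g(x̄) ∩ ∂h(x̄) ≠ ∅. -/
open Filter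
open scoped RealInnerProductSpace Topology

/-!
Strong convexity sharpens the subgradient inequality by `γ/2 ‖z - x‖²`; adding the sharpened
inequalities for `g` and `h` at one DCA step gives the descent
`f x_{k+1} + (γ₁ + γ₂)/2 ‖x_{k+1} - x_k‖² ≤ f x_k`. As `f` is bounded below, the steps
`x_{k+1} - x_k` tend to `0`, so `x_{φ j + 1} → x̄` as well. Subgradients of a continuous function
are bounded near a convergent sequence, so the `y_{φ j + 1}` have a limit point `ȳ`, and passing
to the limit in the subgradient inequalities puts `ȳ` in `∂g x̄` (along `x_{φ j + 1}`) and in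
`∂h x̄` (along `x_{φ j}`).
-/

open Set Metric Bornology

section Subgradient

variable {E : Type*} [NormedAddCommGroup E] [InnerProductSpace ℝ E]

theorem StrongConvexOn.add_inner_add_sq_le {f : E → ℝ} {m : ℝ} (hf : StrongConvexOn univ m f)
    {x v : E} (hv : ∀ z, f x + ⟪v, z - x⟫ ≤ f z) (z : E) :
    f x + ⟪v, z - x⟫ + m / 2 * ‖z - x‖ ^ 2 ≤ f z := by
  -- compare strong convexity on `[x, z]` with the subgradient inequality at `x + t (z - x)`,
  -- then let `t → 0⁺`
  have hsegment : ∀ t ∈ Ioc (0 : ℝ) 1,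
      f x + ⟪v, z - x⟫ + m / 2 * (1 - t) * ‖z - x‖ ^ 2 ≤ f z := by
    rintro t ⟨ht₀, ht₁⟩
    have hconv := hf.2 (mem_univ x) (mem_univ z) (sub_nonneg.2 ht₁) ht₀.le (sub_add_cancel 1 t)
    have hsub := hv ((1 - t) • x + t • z)
    rw [show (1 - t) • x + t • z - x = t • (z - x) by module, real_inner_smul_right] at hsub
    rw [smul_eq_mul, smul_eq_mul, norm_sub_rev] at hconv
    have : t * (f x + ⟪v, z - x⟫ + m / 2 * (1 - t) * ‖z - x‖ ^ 2) ≤ t * f z := by nlinarith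
    exact le_of_mul_le_mul_left this ht₀
  have hlim : Tendsto (fun t : ℝ => f x + ⟪v, z - x⟫ + m / 2 * (1 - t) * ‖z - x‖ ^ 2)
      (𝓝[>] 0) (𝓝 (f x + ⟪v, z - x⟫ + m / 2 * ‖z - x‖ ^ 2)) := by
    refine tendsto_nhdsWithin_of_tendsto_nhds ?_
    have hcont : Continuous fun t : ℝ => f x + ⟪v, z - x⟫ + m / 2 * (1 - t) * ‖z - x‖ ^ 2 := by
      fun_prop
    simpa using hcont.tendsto 0
  exact le_of_tendsto hlim (eventually_of_mem (Ioc_mem_nhdsGT zero_lt_one) hsegment)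

theorem sub_add_sq_le_sub_of_dca_step {g h : E → ℝ} {γ₁ γ₂ : ℝ}
    (hg : StrongConvexOn univ γ₁ g) (hh : StrongConvexOn univ γ₂ h) {x x' y : E}
    (hy : ∀ z, h x + ⟪y, z - x⟫ ≤ h z) (hx : ∀ z, g x' + ⟪y, z - x'⟫ ≤ g z) :
    g x' - h x' + (γ₁ + γ₂) / 2 * ‖x' - x‖ ^ 2 ≤ g x - h x := by
  have hg_x := hg.add_inner_add_sq_le hx x
  have hh_x' := hh.add_inner_add_sq_le hy x'
  rw [norm_sub_rev, ← neg_sub x' x, inner_neg_right] at hg_x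
  linarith

theorem tendsto_zero_of_add_mul_le_of_bddBelow {a d : ℕ → ℝ} {c : ℝ} (hc : 0 < c)
    (hd : ∀ k, 0 ≤ d k) (ha : BddBelow (range a)) (hstep : ∀ k, a (k + 1) + c * d k ≤ a k) :
    Tendsto d atTop (𝓝 0) := by
  have hanti : Antitone a :=
    antitone_nat_of_succ_le fun k => by nlinarith [hstep k, mul_nonneg hc.le (hd k)]
  have hconv := tendsto_atTop_ciInf hanti ha
  have hgap : Tendsto (fun k => (a k - a (k + 1)) / c) atTop (𝓝 0) := by
    simpa using (hconv.sub (hconv.comp (tendsto_add_atTop_nat 1))).div_const c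
  refine squeeze_zero hd (fun k => ?_) hgap
  rw [le_div_iff₀ hc]
  linarith [hstep k]

theorem norm_le_of_subgradient_of_abs_le {f : E → ℝ} {x v : E} {C : ℝ}
    (hC : ∀ z ∈ closedBall x 1, |f z| ≤ C) (hv : ∀ z, f x + ⟪v, z - x⟫ ≤ f z) :
    ‖v‖ ≤ 2 * C := by
  have hC₀ : 0 ≤ C := (abs_nonneg _).trans (hC x (mem_closedBall_self zero_le_one))
  rcases eq_or_ne v 0 with rfl | hv₀
  · simpa using hC₀
  set u := ‖v‖⁻¹ • v
  have hu : ‖u‖ = 1 := norm_smul_inv_norm hv₀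
  have hinner : ⟪v, x + u - x⟫ = ‖v‖ := by
    rw [add_sub_cancel_left, real_inner_smul_right, real_inner_self_eq_norm_sq]
    field_simp
  have hfx := abs_le.1 (hC x (mem_closedBall_self zero_le_one))
  have hfxu := abs_le.1 (hC (x + u) (by simp [hu]))
  linarith [hv (x + u)]

theorem isBounded_range_of_subgradient [ProperSpace E] {f : E → ℝ} (hf : Continuous f)
    {u v : ℕ → E} (hu : IsBounded (range u)) (hv : ∀ j z, f (u j) + ⟪v j, z - u j⟫ ≤ f z) :
    IsBounded (range v) := by
  obtain ⟨R, hR⟩ := hu.subset_closedBall 0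
  obtain ⟨C, hC⟩ := (isCompact_closedBall (0 : E) (R + 1)).exists_bound_of_continuousOn
    hf.continuousOn
  refine isBounded_iff_forall_norm_le.2 ⟨2 * C, ?_⟩
  rintro _ ⟨j, rfl⟩
  refine norm_le_of_subgradient_of_abs_le (fun z hz => hC z ?_) (hv j)
  have huj : dist (u j) 0 ≤ R := hR ⟨j, rfl⟩
  exact closedBall_subset_closedBall' (by linarith) hz

theorem subgradient_of_tendsto {f : E → ℝ} (hf : Continuous f) {u v : ℕ → E} {x w : E}
    (hu : Tendsto u atTop (𝓝 x)) (hv : Tendsto v atTop (𝓝 w))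
    (hsub : ∀ j z, f (u j) + ⟪v j, z - u j⟫ ≤ f z) (z : E) :
    f x + ⟪w, z - x⟫ ≤ f z :=
  le_of_tendsto (((hf.tendsto x).comp hu).add (hv.inner (tendsto_const_nhds.sub hu)))
    (Eventually.of_forall fun j => hsub j z)

end Subgradient

theorem dca_subsequential_limits_critical_general (n : ℕ) (g h : EuclideanSpace ℝ (Fin n) → ℝ)
    (γ₁ γ₂ : ℝ) (hγ : 0 < γ₁ + γ₂)
    (hg : ConvexOn ℝ Set.univ g) (hh : ConvexOn ℝ Set.univ h)
    (hg' : GammaConvex g γ₁) (hh' : GammaConvex h γ₂)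
    (hbdd : BddBelow (Set.range fun z => g z - h z))
    (x y : ℕ → EuclideanSpace ℝ (Fin n))
    (hy : ∀ k, y (k + 1) ∈ Subdiff h (x k))
    (hx : ∀ k, y (k + 1) ∈ Subdiff g (x (k + 1))) :
    ∀ xbar : EuclideanSpace ℝ (Fin n),
      (∃ φ : ℕ → ℕ, StrictMono φ ∧ Tendsto (x ∘ φ) atTop (𝓝 xbar)) →
        (Subdiff g xbar ∩ Subdiff h xbar).Nonempty := by
  rintro xbar ⟨φ, hφ, hlim⟩
  have hgc : Continuous g := continuousOn_univ.1 (hg.continuousOn isOpen_univ)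
  have hhc : Continuous h := continuousOn_univ.1 (hh.continuousOn isOpen_univ)
  have hstep_sq : Tendsto (fun k => ‖x (k + 1) - x k‖ ^ 2) atTop (𝓝 0) :=
    tendsto_zero_of_add_mul_le_of_bddBelow (half_pos hγ) (fun k => by positivity)
      (hbdd.mono (range_comp_subset_range x _)) fun k =>
        sub_add_sq_le_sub_of_dca_step (strongConvexOn_iff_convex.2 hg')
          (strongConvexOn_iff_convex.2 hh') (hy k) (hx k)
  have hstep : Tendsto (fun k => x (k + 1) - x k) atTop (𝓝 0) := by
    rw [tendsto_zero_iff_norm_tendsto_zero]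
    simpa using hstep_sq.sqrt
  have hlim_succ : Tendsto (fun j => x (φ j + 1)) atTop (𝓝 xbar) := by
    simpa using hlim.add (hstep.comp hφ.tendsto_atTop)
  obtain ⟨ybar, -, ψ, hψ, hylim⟩ := tendsto_subseq_of_bounded
    (isBounded_range_of_subgradient hhc (isBounded_range_of_tendsto _ hlim) fun j => hy (φ j))
    (mem_range_self (f := fun j => y (φ j + 1)))
  exact ⟨ybar, subgradient_of_tendsto hgc (hlim_succ.comp hψ.tendsto_atTop) hylim
      fun j => hx (φ (ψ j)),
    subgradient_of_tendsto hhc (hlim.comp hψ.tendsto_atTop) hylim fun j => hy (φ (ψ j))⟩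

/-- DCA convergence: with `g` `γ₁`-convex, `h` `γ₂`-convex, `γ₁ + γ₂ > 0`, if `f = g − h` is
bounded below and the DCA sequence `(x_k)` is bounded, then every subsequential limit of
`(x_k)` is a critical point of `f`, i.e. `∂g(xbar) ∩ ∂h(xbar) ≠ ∅`. -/
theorem dca_subsequential_limits_critical (n : ℕ) (g h : EuclideanSpace ℝ (Fin n) → ℝ)
    (γ₁ γ₂ : ℝ) (hγ₁ : 0 ≤ γ₁) (hγ₂ : 0 ≤ γ₂) (hγ : 0 < γ₁ + γ₂)
    (hg : ConvexOn ℝ Set.univ g) (hh : ConvexOn ℝ Set.univ h)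
    (hg' : GammaConvex g γ₁) (hh' : GammaConvex h γ₂)
    (hbdd : BddBelow (Set.range fun z => g z - h z))
    (x y : ℕ → EuclideanSpace ℝ (Fin n))
    (hy : ∀ k, y (k + 1) ∈ Subdiff h (x k))
    (hx : ∀ k, y (k + 1) ∈ Subdiff g (x (k + 1)))
    (hxb : Bornology.IsBounded (Set.range x)) :
    ∀ xbar : EuclideanSpace ℝ (Fin n),
      (∃ φ : ℕ → ℕ, StrictMono φ ∧ Tendsto (x ∘ φ) atTop (𝓝 xbar)) →
        (Subdiff g xbar ∩ Subdiff h xbar).Nonempty :=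
  dca_subsequential_limits_critical_general n g h γ₁ γ₂ hγ hg hh hg' hh' hbdd x y hy hx
end

section
/- The function f(x¹,…,x^k) = Σ_{i=1}^m min_{ℓ=1,…,k} ‖x^ℓ − aⁱ‖ + Σ_{ℓ=1}^k ‖x^ℓ − x*‖, where x* = (1/k)Σ_{j=1}^k x^j, is a difference of two convex functions on (ℝⁿ)^k: namely f = g − h with g(x¹,…,x^k) = Σ_i Σ_ℓ ‖x^ℓ − aⁱ‖ + Σ_ℓ ‖x^ℓ − x*‖ and h(x¹,…,x^k) = Σ_i max_{r} Σ_{ℓ≠r} ‖x^ℓ − aⁱ‖, both convex. -/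
/-!
Each `‖x ℓ - c‖` is a norm composed with an affine map of `x`, hence convex, and convexity is
preserved by finite sums and finite suprema; this gives the convexity of `g` and `h`.
For the decomposition, removing one term from `∑ ℓ, ‖x ℓ - aⁱ‖` and maximising over the removed
index leaves the full sum minus the smallest term, so `min_ℓ ‖x ℓ - aⁱ‖` is `∑_ℓ ‖x ℓ - aⁱ‖`
minus the `i`-th summand of `h`.
-/

open Finset

theorem ConvexOn.sum {𝕜 E β ι : Type*} [Semiring 𝕜] [PartialOrder 𝕜] [AddCommMonoid E]
    [SMul 𝕜 E] [AddCommMonoid β] [PartialOrder β] [IsOrderedAddMonoid β] [Module 𝕜 β]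
    {s : Set E} (hs : Convex 𝕜 s) (t : Finset ι) {f : ι → E → β}
    (hf : ∀ i ∈ t, ConvexOn 𝕜 s (f i)) :
    ConvexOn 𝕜 s (fun x => ∑ i ∈ t, f i x) := by
  induction t using Finset.cons_induction with
  | empty => simpa using convexOn_const (0 : β) hs
  | cons i t hi ih =>
    simp only [Finset.sum_cons]
    exact (hf i (mem_cons_self i t)).add (ih fun j hj => hf j (mem_cons_of_mem hj))

theorem ConvexOn.ciSup {E ι : Type*} [AddCommMonoid E] [Module ℝ E] [Finite ι]
    {s : Set E} (hs : Convex ℝ s) {f : ι → E → ℝ} (hf : ∀ i, ConvexOn ℝ s (f i)) :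
    ConvexOn ℝ s (fun x => ⨆ i, f i x) := by
  cases isEmpty_or_nonempty ι
  · simpa only [Real.iSup_of_isEmpty] using convexOn_const (0 : ℝ) hs
  refine ⟨hs, fun x hx y hy a b ha hb hab => ciSup_le fun i => ?_⟩
  calc f i (a • x + b • y) ≤ a • f i x + b • f i y := (hf i).2 hx hy ha hb hab
    _ ≤ a • (⨆ j, f j x) + b • ⨆ j, f j y := by
      gcongr
      · exact le_ciSup (Finite.bddAbove_range fun j => f j x) i
      · exact le_ciSup (Finite.bddAbove_range fun j => f j y) i

theorem convexOn_univ_norm_linearMap_sub {E F : Type*} [AddCommGroup E] [Module ℝ E]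
    [NormedAddCommGroup F] [NormedSpace ℝ F] (L : E →ₗ[ℝ] F) (c : F) :
    ConvexOn ℝ Set.univ (fun x => ‖L x - c‖) := by
  simpa only [Set.preimage_univ, Function.comp_def, dist_eq_norm] using
    (convexOn_univ_dist c).comp_linearMap L

theorem ciSup_const_sub {α ι : Type*} [ConditionallyCompleteLinearOrder α] [AddCommGroup α]
    [IsOrderedAddMonoid α] [Finite ι] [Nonempty ι] (c : α) (f : ι → α) :
    ⨆ i, (c - f i) = c - ⨅ i, f i := by
  obtain ⟨i₀, hi₀⟩ := exists_eq_ciInf_of_finite (f := f)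
  refine le_antisymm (ciSup_le fun i => ?_) ?_
  · exact sub_le_sub_left (ciInf_le (Finite.bddBelow_range f) i) c
  · rw [← hi₀]
    exact le_ciSup (f := fun i => c - f i) (Finite.bddAbove_range _) i₀

theorem ciInf_add_ciSup_sum_erase {ι : Type*} [Fintype ι] [DecidableEq ι] (f : ι → ℝ) :
    (⨅ i, f i) + ⨆ r, ∑ i ∈ univ.erase r, f i = ∑ i, f i := by
  cases isEmpty_or_nonempty ι
  · simp [Real.iInf_of_isEmpty, Real.iSup_of_isEmpty]
  simp only [sum_erase_eq_sub (mem_univ _), ciSup_const_sub]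
  ring

theorem clustering_objective_dc_general (n m k : ℕ)
    (a : Fin m → EuclideanSpace ℝ (Fin n)) :
    ConvexOn ℝ Set.univ
      (fun x : Fin k → EuclideanSpace ℝ (Fin n) =>
        (∑ i : Fin m, ∑ ℓ : Fin k, ‖x ℓ - a i‖)
          + ∑ ℓ : Fin k, ‖x ℓ - (k : ℝ)⁻¹ • ∑ j : Fin k, x j‖) ∧
    ConvexOn ℝ Set.univ
      (fun x : Fin k → EuclideanSpace ℝ (Fin n) =>
        ∑ i : Fin m, ⨆ r : Fin k, ∑ ℓ ∈ univ.erase r, ‖x ℓ - a i‖) ∧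
    ∀ x : Fin k → EuclideanSpace ℝ (Fin n),
      (∑ i : Fin m, ⨅ ℓ : Fin k, ‖x ℓ - a i‖)
          + ∑ ℓ : Fin k, ‖x ℓ - (k : ℝ)⁻¹ • ∑ j : Fin k, x j‖
        = ((∑ i : Fin m, ∑ ℓ : Fin k, ‖x ℓ - a i‖)
            + ∑ ℓ : Fin k, ‖x ℓ - (k : ℝ)⁻¹ • ∑ j : Fin k, x j‖)
          - ∑ i : Fin m, ⨆ r : Fin k, ∑ ℓ ∈ univ.erase r, ‖x ℓ - a i‖ := by
  let proj (j : Fin k) :=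
    LinearMap.proj (R := ℝ) (φ := fun _ : Fin k => EuclideanSpace ℝ (Fin n)) j
  have dist_point (ℓ : Fin k) (c : EuclideanSpace ℝ (Fin n)) :
      ConvexOn ℝ Set.univ (fun x : Fin k → EuclideanSpace ℝ (Fin n) => ‖x ℓ - c‖) :=
    convexOn_univ_norm_linearMap_sub (proj ℓ) c
  have dist_centroid (ℓ : Fin k) :
      ConvexOn ℝ Set.univ (fun x : Fin k → EuclideanSpace ℝ (Fin n) =>
        ‖x ℓ - (k : ℝ)⁻¹ • ∑ j : Fin k, x j‖) := by
    simpa [proj] using convexOn_univ_norm_linearMap_sub (proj ℓ - (k : ℝ)⁻¹ • ∑ j, proj j) 0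
  refine ⟨?_, ?_, fun x => ?_⟩
  · exact (ConvexOn.sum convex_univ _ fun i _ => ConvexOn.sum convex_univ _ fun ℓ _ =>
      dist_point ℓ (a i)).add (ConvexOn.sum convex_univ _ fun ℓ _ => dist_centroid ℓ)
  · exact ConvexOn.sum convex_univ _ fun i _ => ConvexOn.ciSup convex_univ fun r =>
      ConvexOn.sum convex_univ _ fun ℓ _ => dist_point ℓ (a i)
  · have split (i : Fin m) := ciInf_add_ciSup_sum_erase fun ℓ => ‖x ℓ - a i‖
    rw [← sum_congr rfl fun i _ => split i, sum_add_distrib]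
    ring

/-- The clustering objective
`f(x¹,…,x^k) = Σ_i min_ℓ ‖x^ℓ − aⁱ‖ + Σ_ℓ ‖x^ℓ − x*‖`, `x* = (1/k)Σ_j x^j`,
is a difference of convex functions: `f = g − h` with
`g = Σ_i Σ_ℓ ‖x^ℓ − aⁱ‖ + Σ_ℓ ‖x^ℓ − x*‖` and `h = Σ_i max_r Σ_{ℓ≠r} ‖x^ℓ − aⁱ‖`,
both convex. -/
theorem clustering_objective_dc (n m k : ℕ) (hk : 0 < k)
    (a : Fin m → EuclideanSpace ℝ (Fin n)) :
    ConvexOn ℝ Set.univ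
      (fun x : Fin k → EuclideanSpace ℝ (Fin n) =>
        (∑ i : Fin m, ∑ ℓ : Fin k, ‖x ℓ - a i‖)
          + ∑ ℓ : Fin k, ‖x ℓ - (k : ℝ)⁻¹ • ∑ j : Fin k, x j‖) ∧
    ConvexOn ℝ Set.univ
      (fun x : Fin k → EuclideanSpace ℝ (Fin n) =>
        ∑ i : Fin m, ⨆ r : Fin k, ∑ ℓ ∈ univ.erase r, ‖x ℓ - a i‖) ∧
    ∀ x : Fin k → EuclideanSpace ℝ (Fin n),
      (∑ i : Fin m, ⨅ ℓ : Fin k, ‖x ℓ - a i‖)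
          + ∑ ℓ : Fin k, ‖x ℓ - (k : ℝ)⁻¹ • ∑ j : Fin k, x j‖
        = ((∑ i : Fin m, ∑ ℓ : Fin k, ‖x ℓ - a i‖)
            + ∑ ℓ : Fin k, ‖x ℓ - (k : ℝ)⁻¹ • ∑ j : Fin k, x j‖)
          - ∑ i : Fin m, ⨆ r : Fin k, ∑ ℓ ∈ univ.erase r, ‖x ℓ - a i‖ :=
  clustering_objective_dc_general n m k a
end

section
/- For convex functions g, h: ℝⁿ → ℝ, if the DCA sequence satisfies y_{k+1} ∈ ∂h(x_k) and y_{k+1} ∈ ∂g(x_{k+1}), then the sequence (g(x_k) − h(x_k)) is monotone nonincreasing. -/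
open scoped RealInnerProductSpace

/-- Along the DCA iteration `y_{k+1} ∈ ∂h(x_k)`, `y_{k+1} ∈ ∂g(x_{k+1})`, the values
`g(x_k) − h(x_k)` are monotone nonincreasing. -/
theorem dca_monotone (n : ℕ) (g h : EuclideanSpace ℝ (Fin n) → ℝ)
    (hg : ConvexOn ℝ Set.univ g) (hh : ConvexOn ℝ Set.univ h)
    (x y : ℕ → EuclideanSpace ℝ (Fin n))
    (hy : ∀ k, y (k + 1) ∈ Subdiff h (x k))
    (hx : ∀ k, y (k + 1) ∈ Subdiff g (x (k + 1))) :
    Antitone (fun k => g (x k) - h (x k)) := by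
  apply antitone_nat_of_succ_le
  intro k
  have h1 := hy k (x (k + 1))
  have h2 := hx k (x k)
  have : ⟪y (k+1), x k - x (k+1)⟫ = - ⟪y (k+1), x (k+1) - x k⟫ := by
    rw [← inner_neg_right]; congr 1; abel
  linarith [h1, h2, this.ge, this.le]
end
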